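/- If $z \in \mathbb{C}^4$ has phase difference $\phi_z = 0$ (i.e., $\arg z_1 + \arg z_4 = \arg z_2 + \arg z_3$ mod $2\pi$, with all entries nonzero, or equivalently $z_1 z_4 \overline{z_2 z_3}$ is a nonnegative real), then $\|z\|_{\mathsf{X}} = |z_1| + |z_2| + |z_3| + |z_4|$. -/

import Mathlib

/-!
By the triangle inequality, `Xfun z σ ≤ ∑ i, ‖z i‖` for every `σ`. The phase condition
`z 0 * z 3 * conj (z 1 * z 2) ≥ 0` says that `z 0 * z 3` and `z 1 * z 2` lie on a common ray, so
one rotation `exp (σ I)` turns both onto the nonnegative reals. For that `σ`, each summand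
`z i * exp (σ I) + conj (z j)` adds two vectors on a common ray, and the triangle inequality is
an equality.
-/

open Complex Real

noncomputable def Xfun (z : Fin 4 → ℂ) (σ : ℝ) : ℝ :=
  ‖z 0 * Complex.exp (σ * Complex.I) + (starRingEnd ℂ) (z 3)‖ +
  ‖z 1 * Complex.exp (σ * Complex.I) + (starRingEnd ℂ) (z 2)‖

noncomputable def Xnorm (z : Fin 4 → ℂ) : ℝ := ⨆ σ : ℝ, Xfun z σ

noncomputable def phase (z : Fin 4 → ℂ) : ℝ :=
  (Complex.arg (z 0) + Complex.arg (z 3)) - (Complex.arg (z 1) + Complex.arg (z 2))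

open ComplexConjugate ComplexOrder

namespace Complex

theorem sameRay_of_nonneg_mul_conj {x y : ℂ} (h : 0 ≤ x * conj y) : SameRay ℝ x y := by
  rcases eq_or_ne y 0 with rfl | hy
  · exact SameRay.zero_right x
  have hx : x = ((x * conj y).re / ‖y‖ ^ 2) • y := by
    have hy' : conj y ≠ 0 := (map_ne_zero _).mpr hy
    rw [real_smul, ofReal_div, ← eq_re_of_ofReal_le h, ofReal_pow, ← mul_conj']
    field_simp
  rw [hx]
  exact SameRay.sameRay_nonneg_smul_left y (div_nonneg (nonneg_iff.mp h).1 (by positivity))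

theorem nonneg_mul_exp_neg_arg_mul_I (x : ℂ) : 0 ≤ x * exp (↑(-x.arg) * I) := by
  have hx : x * exp (↑(-x.arg) * I) = ‖x‖ := by
    nth_rw 1 [← norm_mul_exp_arg_mul_I x]
    rw [mul_assoc, ← exp_add, ofReal_neg, neg_mul, add_neg_cancel, exp_zero, mul_one]
  exact hx ▸ zero_le_real.mpr (norm_nonneg x)

theorem exists_nonneg_mul_exp_mul_I_of_nonneg_mul_conj {w u : ℂ} (h : 0 ≤ w * conj u) :
    ∃ σ : ℝ, 0 ≤ w * exp (σ * I) ∧ 0 ≤ u * exp (σ * I) := by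
  rcases eq_or_ne w 0 with rfl | hw
  · exact ⟨-u.arg, by simp, nonneg_mul_exp_neg_arg_mul_I u⟩
  obtain ⟨r, hr, rfl⟩ := (sameRay_of_nonneg_mul_conj h).exists_nonneg_left hw
  refine ⟨-w.arg, nonneg_mul_exp_neg_arg_mul_I w, ?_⟩
  rw [real_smul, mul_assoc]
  exact mul_nonneg (zero_le_real.mpr hr) (nonneg_mul_exp_neg_arg_mul_I w)

theorem norm_mul_add_conj_le (a b : ℂ) {c : ℂ} (hc : ‖c‖ = 1) :
    ‖a * c + conj b‖ ≤ ‖a‖ + ‖b‖ :=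
  (norm_add_le _ _).trans_eq (by rw [norm_mul, hc, mul_one, norm_conj])

theorem norm_mul_add_conj_eq {a b c : ℂ} (hc : ‖c‖ = 1) (h : 0 ≤ a * b * c) :
    ‖a * c + conj b‖ = ‖a‖ + ‖b‖ := by
  have hray : SameRay ℝ (a * c) (conj b) :=
    sameRay_of_nonneg_mul_conj (by rwa [conj_conj, mul_right_comm])
  rw [hray.norm_add, norm_mul, hc, mul_one, norm_conj]

end Complex

theorem Xfun_le_sum_norm (z : Fin 4 → ℂ) (σ : ℝ) : Xfun z σ ≤ ∑ i, ‖z i‖ := by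
  have hc := norm_exp_ofReal_mul_I σ
  rw [Xfun, Fin.sum_univ_four]
  linarith [norm_mul_add_conj_le (z 0) (z 3) hc, norm_mul_add_conj_le (z 1) (z 2) hc]

theorem Xfun_eq_sum_norm {z : Fin 4 → ℂ} {σ : ℝ} (h₀₃ : 0 ≤ z 0 * z 3 * exp (σ * I))
    (h₁₂ : 0 ≤ z 1 * z 2 * exp (σ * I)) : Xfun z σ = ∑ i, ‖z i‖ := by
  have hc := norm_exp_ofReal_mul_I σ
  rw [Xfun, norm_mul_add_conj_eq hc h₀₃, norm_mul_add_conj_eq hc h₁₂, Fin.sum_univ_four]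
  ring

theorem stmt_7 (z : Fin 4 → ℂ)
    (h : ∃ r : ℝ, 0 ≤ r ∧ z 0 * z 3 * (starRingEnd ℂ) (z 1) * (starRingEnd ℂ) (z 2) = r) :
    Xnorm z = ∑ i : Fin 4, ‖z i‖ := by
  obtain ⟨r, hr, hz⟩ := h
  have hprod : 0 ≤ z 0 * z 3 * conj (z 1 * z 2) := by
    rw [map_mul, ← mul_assoc, hz]
    exact zero_le_real.mpr hr
  obtain ⟨σ, h₀₃, h₁₂⟩ := exists_nonneg_mul_exp_mul_I_of_nonneg_mul_conj hprod
  exact IsGreatest.csSup_eq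
    ⟨⟨σ, Xfun_eq_sum_norm h₀₃ h₁₂⟩, Set.forall_mem_range.mpr (Xfun_le_sum_norm z)⟩
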